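/- arXiv:2210.12289 — 3 statements merged into one kernel-verified Lean document; each statement's English description precedes it below -/
import Mathlib

section
/- In the Ellentuck topology on [ω]^ω, every meager set is nowhere dense. -/
/-- The space `[ω]^ω` of infinite subsets of `ℕ`. -/
def EllSpace : Type := {S : Set ℕ // S.Infinite}

/-- The basic Ellentuck set `[a, A] = {S : a ⊆ S ⊆ a ∪ A}`. -/
def EllBasic (a : Finset ℕ) (A : Set ℕ) : Set EllSpace :=
  {S | ↑a ⊆ S.1 ∧ S.1 ⊆ ↑a ∪ A}

/-- The Ellentuck topology on `[ω]^ω`, generated by the sets `[a, A]` with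
`A` infinite and every element of `a` below every element of `A`. -/
instance : TopologicalSpace EllSpace :=
  TopologicalSpace.generateFrom
    {U | ∃ (a : Finset ℕ) (A : Set ℕ), A.Infinite ∧
      (∀ x ∈ a, ∀ y ∈ A, x < y) ∧ U = EllBasic a A}

/-!
Call `X` Ramsey null if every `[a, A]` contains some `[a, B]` disjoint from `X`. Ramsey null
sets are nowhere dense, since the sets `[a, B]` are open. Conversely, a nowhere dense `X` is
Ramsey null by Galvin–Prikry combinatorial forcing: otherwise a fusion argument yields `C ⊆ A`
such that no `[a ∪ s, C']` with `s ⊆ C` finite and `C' ⊆ C/s` misses `X`, while nowhere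
density provides a basic subset of the open set `[a, C]` of exactly this form that does.
Another fusion shows that Ramsey null sets are closed under countable unions, so every meagre
set is Ramsey null and hence nowhere dense.
-/

open Set TopologicalSpace

namespace Ellentuck

lemma infinite_inter_Ioi {A : Set ℕ} (hA : A.Infinite) (n : ℕ) : (A ∩ Ioi n).Infinite := by
  simpa only [sdiff_eq, compl_Iic] using hA.sdiff (finite_Iic n)

/-- `B/s` in the usual notation. -/
def above (s : Finset ℕ) (B : Set ℕ) : Set ℕ := {y ∈ B | ∀ x ∈ s, x < y}

lemma above_subset (s : Finset ℕ) (B : Set ℕ) : above s B ⊆ B := fun _ hy => hy.1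

lemma above_mono (s : Finset ℕ) {B C : Set ℕ} (h : C ⊆ B) : above s C ⊆ above s B :=
  fun _ hy => ⟨h hy.1, hy.2⟩

@[simp]
lemma above_empty (B : Set ℕ) : above ∅ B = B := by
  ext; simp [above]

lemma above_insert (n : ℕ) (s : Finset ℕ) (B : Set ℕ) :
    above (insert n s) B = above s B ∩ Ioi n := by
  ext y; simp only [above, Finset.forall_mem_insert, mem_ofPred_eq, mem_inter_iff, mem_Ioi]; tauto

lemma infinite_above {B : Set ℕ} (hB : B.Infinite) (s : Finset ℕ) : (above s B).Infinite :=
  (infinite_inter_Ioi hB (s.sup id)).mono fun _ hy =>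
    ⟨hy.1, fun _ hx => (Finset.le_sup (f := id) hx).trans_lt hy.2⟩

lemma ellBasic_mono {a c : Finset ℕ} {A C : Set ℕ} (hac : a ⊆ c) (h : ↑c ∪ C ⊆ ↑a ∪ A) :
    EllBasic c C ⊆ EllBasic a A :=
  fun _ hS => ⟨(Finset.coe_subset.2 hac).trans hS.1, hS.2.trans h⟩

lemma ellBasic_mono_right (a : Finset ℕ) {A C : Set ℕ} (h : C ⊆ A) :
    EllBasic a C ⊆ EllBasic a A :=
  ellBasic_mono subset_rfl (union_subset_union_right _ h)

lemma mem_ellBasic_union (a : Finset ℕ) {A : Set ℕ} (hA : A.Infinite) :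
    (⟨↑a ∪ A, hA.mono subset_union_right⟩ : EllSpace) ∈ EllBasic a A :=
  ⟨subset_union_left, subset_rfl⟩

lemma subset_of_ellBasic_subset {a c : Finset ℕ} {A C : Set ℕ} (hC : C.Infinite)
    (h : EllBasic c C ⊆ EllBasic a A) : a ⊆ c ∧ ↑c ∪ C ⊆ ↑a ∪ A :=
  ⟨fun _ hx => (((h <| ellBasic_mono_right c sdiff_subset <|
      mem_ellBasic_union c (hC.sdiff a.finite_toSet)).1 hx).resolve_right fun hx' => hx'.2 hx),
    (h (mem_ellBasic_union c hC)).2⟩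

noncomputable def initialSegment (T : EllSpace) (N : ℕ) : Finset ℕ :=
  ((finite_Iic N).inter_of_right T.1).toFinset

lemma mem_initialSegment {T : EllSpace} {N x : ℕ} :
    x ∈ initialSegment T N ↔ x ∈ T.1 ∧ x ≤ N := by
  simp [initialSegment]

lemma mem_ellBasic_initialSegment (T : EllSpace) (N : ℕ) :
    T ∈ EllBasic (initialSegment T N) (T.1 ∩ Ioi N) := by
  refine ⟨fun x hx => (mem_initialSegment.1 hx).1, fun x hx => ?_⟩
  rcases le_or_gt x N with hxN | hxN
  · exact Or.inl (mem_initialSegment.2 ⟨hx, hxN⟩)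
  · exact Or.inr ⟨hx, hxN⟩

lemma initialSegment_union_subset (T : EllSpace) (N : ℕ) :
    ↑(initialSegment T N) ∪ (T.1 ∩ Ioi N) ⊆ T.1 :=
  union_subset (fun _ hx => (mem_initialSegment.1 hx).1) inter_subset_left

lemma ellBasic_initialSegment_subset {T : EllSpace} {a : Finset ℕ} {A : Set ℕ}
    (hT : T ∈ EllBasic a A) {N : ℕ} (haN : ∀ x ∈ a, x ≤ N) :
    EllBasic (initialSegment T N) (T.1 ∩ Ioi N) ⊆ EllBasic a A :=
  ellBasic_mono (fun x hx => mem_initialSegment.2 ⟨hT.1 hx, haN x hx⟩)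
    ((initialSegment_union_subset T N).trans hT.2)

lemma isTopologicalBasis_ellBasic :
    IsTopologicalBasis {U : Set EllSpace | ∃ (a : Finset ℕ) (A : Set ℕ), A.Infinite ∧
      (∀ x ∈ a, ∀ y ∈ A, x < y) ∧ U = EllBasic a A} where
  exists_subset_inter := by
    rintro _ ⟨a, A, -, -, rfl⟩ _ ⟨c, C, -, -, rfl⟩ T ⟨hTa, hTc⟩
    set N := (a ∪ c).sup id
    have hle : ∀ x ∈ a ∪ c, x ≤ N := fun x hx => Finset.le_sup (f := id) hx
    refine ⟨_, ⟨initialSegment T N, T.1 ∩ Ioi N, infinite_inter_Ioi T.2 N,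
      fun x hx y hy => (mem_initialSegment.1 hx).2.trans_lt hy.2, rfl⟩,
      mem_ellBasic_initialSegment T N, subset_inter ?_ ?_⟩
    · exact ellBasic_initialSegment_subset hTa fun x hx => hle x (Finset.mem_union_left _ hx)
    · exact ellBasic_initialSegment_subset hTc fun x hx => hle x (Finset.mem_union_right _ hx)
  sUnion_eq := eq_univ_of_forall fun T =>
    ⟨EllBasic ∅ univ, ⟨∅, univ, infinite_univ, by simp, rfl⟩, by simp [EllBasic]⟩
  eq_generateFrom := rfl

lemma isOpen_ellBasic {a : Finset ℕ} {A : Set ℕ} (hA : A.Infinite)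
    (haA : ∀ x ∈ a, ∀ y ∈ A, x < y) : IsOpen (EllBasic a A) :=
  isTopologicalBasis_ellBasic.isOpen ⟨a, A, hA, haA, rfl⟩

lemma exists_ellBasic_subset_of_mem_open {U : Set EllSpace} {T : EllSpace} (hT : T ∈ U)
    (hU : IsOpen U) : ∃ (a : Finset ℕ) (A : Set ℕ), A.Infinite ∧
      (∀ x ∈ a, ∀ y ∈ A, x < y) ∧ T ∈ EllBasic a A ∧ EllBasic a A ⊆ U := by
  obtain ⟨_, ⟨a, A, hA, haA, rfl⟩, hTa, haU⟩ :=
    isTopologicalBasis_ellBasic.exists_subset_of_mem_open hT hU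
  exact ⟨a, A, hA, haA, hTa, haU⟩

lemma exists_ellBasic_subset_disjoint_of_isNowhereDense {X : Set EllSpace}
    (hX : IsNowhereDense X) {a : Finset ℕ} {A : Set ℕ} (hA : A.Infinite)
    (haA : ∀ x ∈ a, ∀ y ∈ A, x < y) :
    ∃ (c : Finset ℕ) (C : Set ℕ), C.Infinite ∧ (∀ x ∈ c, ∀ y ∈ C, x < y) ∧
      EllBasic c C ⊆ EllBasic a A ∧ Disjoint (EllBasic c C) X := by
  have hdense : Dense (closure X)ᶜ :=
    (isClosed_isNowhereDense_iff_compl.1 ⟨isClosed_closure, hX.closure⟩).2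
  obtain ⟨T, hT⟩ := hdense.inter_open_nonempty _ (isOpen_ellBasic hA haA)
    ⟨_, mem_ellBasic_union a hA⟩
  obtain ⟨c, C, hC, hcC, -, hsub⟩ := exists_ellBasic_subset_of_mem_open hT
    ((isOpen_ellBasic hA haA).inter isClosed_closure.isOpen_compl)
  exact ⟨c, C, hC, hcC, hsub.trans inter_subset_left,
    disjoint_left.2 fun S hS hSX => (hsub hS).2 (subset_closure hSX)⟩

section Fusion

variable {P : Finset ℕ → Set ℕ → Prop}

lemma exists_subset_forall_mem_finset (mono : ∀ s {C D : Set ℕ}, D ⊆ C → P s C → P s D)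
    (dense : ∀ s C, C.Infinite → ∃ D ⊆ C, D.Infinite ∧ P s D) (F : Finset (Finset ℕ))
    {C : Set ℕ} (hC : C.Infinite) :
    ∃ D ⊆ C, D.Infinite ∧ ∀ s ∈ F, P s D := by
  induction F using Finset.induction_on with
  | empty => exact ⟨C, subset_rfl, hC, by simp⟩
  | insert s F _ ih =>
    obtain ⟨D, hDC, hD, hPD⟩ := ih
    obtain ⟨E, hED, hE, hPE⟩ := dense s D hD
    exact ⟨E, hED.trans hDC, hE, Finset.forall_mem_insert _ _ _ |>.2
      ⟨hPE, fun t ht => mono t hED (hPD t ht)⟩⟩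

lemma exists_fusion (mono : ∀ s {C D : Set ℕ}, D ⊆ C → P s C → P s D)
    (dense : ∀ s C, C.Infinite → ∃ D ⊆ C, D.Infinite ∧ P s D) {A : Set ℕ}
    (hA : A.Infinite) : ∃ B ⊆ A, B.Infinite ∧ ∀ s : Finset ℕ, ↑s ⊆ B → P s (above s B) := by
  have step (C : {C : Set ℕ // C.Infinite}) : ∃ D : {D : Set ℕ // D.Infinite},
      D.1 ⊆ C.1 ∩ Ioi (sInf C.1) ∧
        ∀ s ∈ (Finset.range (sInf C.1 + 1)).powerset, P s D.1 := by
    obtain ⟨D, hDC, hD, hPD⟩ := exists_subset_forall_mem_finset mono dense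
      (Finset.range (sInf C.1 + 1)).powerset (infinite_inter_Ioi C.2 (sInf C.1))
    exact ⟨⟨D, hD⟩, hDC, hPD⟩
  choose g hg_sub hg_P using step
  obtain ⟨A₀, hA₀A, hA₀, hPA₀⟩ := dense ∅ A hA
  let C : ℕ → Set ℕ := fun k => (g^[k] ⟨A₀, hA₀⟩).1
  let n : ℕ → ℕ := fun k => sInf (C k)
  have hC_succ (k : ℕ) : C (k + 1) = (g (g^[k] ⟨A₀, hA₀⟩)).1 := by
    simp only [C, Function.iterate_succ_apply']
  have hn_mem (k : ℕ) : n k ∈ C k := Nat.sInf_mem (g^[k] ⟨A₀, hA₀⟩).2.nonempty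
  have hC_anti : Antitone C :=
    antitone_nat_of_succ_le fun k => (hC_succ k ▸ hg_sub _).trans inter_subset_left
  have hn : StrictMono n :=
    strictMono_nat_of_lt_succ fun k => ((hC_succ k ▸ hg_sub _) (hn_mem (k + 1))).2
  refine ⟨range n, ?_, infinite_range_of_injective hn.injective, fun s hs => ?_⟩
  · rintro _ ⟨k, rfl⟩
    exact hA₀A (hC_anti (Nat.zero_le k) (hn_mem k))
  rcases s.eq_empty_or_nonempty with rfl | hne
  · rw [above_empty]
    exact mono ∅ (by rintro _ ⟨k, rfl⟩; exact hC_anti (Nat.zero_le k) (hn_mem k)) hPA₀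
  -- With `n k = max s`, the tail `B/s` is `{n j | k < j} ⊆ C (k + 1)`.
  obtain ⟨k, hk⟩ := hs (s.max'_mem hne)
  refine mono s ?_ (hC_succ k ▸ hg_P _ s (Finset.mem_powerset.2 fun x hx => ?_))
  · rintro _ ⟨⟨j, rfl⟩, hj⟩
    exact hC_anti (hn.lt_iff_lt.1 (hk ▸ hj _ (s.max'_mem hne))) (hn_mem j)
  · have hx_le : x ≤ n k := hk ▸ s.le_max' x hx
    exact Finset.mem_range.2 (Nat.lt_succ_of_le hx_le)

end Fusion

/-- Galvin–Prikry terminology, applied to the complement of `X`. -/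
def Accepts (X : Set EllSpace) (c : Finset ℕ) (C : Set ℕ) : Prop :=
  Disjoint (EllBasic c C) X

def Rejects (X : Set EllSpace) (c : Finset ℕ) (B : Set ℕ) : Prop :=
  ∀ C ⊆ B, C.Infinite → ¬Accepts X c C

variable {X : Set EllSpace}

lemma Accepts.mono {c : Finset ℕ} {C D : Set ℕ} (h : Accepts X c D) (hCD : C ⊆ D) :
    Accepts X c C :=
  h.mono_left (ellBasic_mono_right c hCD)

lemma Rejects.mono {c : Finset ℕ} {B C : Set ℕ} (h : Rejects X c B) (hCB : C ⊆ B) :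
    Rejects X c C :=
  fun D hDC => h D (hDC.trans hCB)

/-- A point of `[c, K]` lies in `[insert n c, K ∩ Ioi n]` for `n` its least element outside `c`;
so if `D` rejects `c`, only finitely many one-point extensions of `c` can be accepted. -/
lemma Rejects.finite_accepts_insert {c : Finset ℕ} {D : Set ℕ} (h : Rejects X c D) :
    {n ∈ D | Accepts X (insert n c) (D ∩ Ioi n)}.Finite := by
  by_contra hK
  refine h _ (sep_subset _ _) hK (disjoint_left.2 fun T hT hTX => ?_)
  set n := sInf (T.1 \ c)
  have hn : n ∈ T.1 \ c := Nat.sInf_mem (T.2.sdiff c.finite_toSet).nonempty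
  have hnK := (hT.2 hn.1).resolve_left hn.2
  refine disjoint_left.1 hnK.2 ⟨?_, fun x hx => ?_⟩ hTX
  · simpa [insert_subset_iff] using ⟨hn.1, hT.1⟩
  rcases em (x ∈ c) with hxc | hxc
  · exact Or.inl (by simp [hxc])
  rcases (Nat.sInf_le ⟨hx, hxc⟩ : n ≤ x).eq_or_lt with hnx | hnx
  · exact Or.inl (Finset.mem_coe.2 (hnx ▸ Finset.mem_insert_self n c))
  · exact Or.inr ⟨((hT.2 hx).resolve_left hxc).1, hnx⟩

variable {a : Finset ℕ}

lemma exists_subset_decides {A : Set ℕ} (hA : A.Infinite) : ∃ B ⊆ A, B.Infinite ∧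
    ∀ s : Finset ℕ, ↑s ⊆ B →
      Accepts X (a ∪ s) (above s B) ∨ Rejects X (a ∪ s) (above s B) := by
  refine exists_fusion (P := fun s C => Accepts X (a ∪ s) C ∨ Rejects X (a ∪ s) C)
    (fun s C D hDC h => h.imp (·.mono hDC) (·.mono hDC)) (fun s C hC => ?_) hA
  by_cases hrej : Rejects X (a ∪ s) C
  · exact ⟨C, subset_rfl, hC, Or.inr hrej⟩
  · simp only [Rejects, not_forall, not_not] at hrej
    obtain ⟨D, hDC, hD, hacc⟩ := hrej
    exact ⟨D, hDC, hD, Or.inl hacc⟩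

/-- Remove from each tail `B/s` the finitely many `n` for which `a ∪ s ∪ {n}` is accepted:
since `B` decides, every extension is then rejected. -/
lemma exists_subset_rejects_of_decides {B : Set ℕ} (hB : B.Infinite) (hrej : Rejects X a B)
    (hdec : ∀ s : Finset ℕ, ↑s ⊆ B →
      Accepts X (a ∪ s) (above s B) ∨ Rejects X (a ∪ s) (above s B)) :
    ∃ C ⊆ B, C.Infinite ∧ ∀ s : Finset ℕ, ↑s ⊆ C → Rejects X (a ∪ s) (above s C) := by
  let K (s : Finset ℕ) : Set ℕ :=
    {n ∈ above s B | Accepts X (insert n (a ∪ s)) (above s B ∩ Ioi n)}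
  have dense (s : Finset ℕ) (C : Set ℕ) (hC : C.Infinite) : ∃ D ⊆ C, D.Infinite ∧
      (↑s ⊆ B → Rejects X (a ∪ s) (above s B) → Disjoint D (K s)) := by
    by_cases hs : ↑s ⊆ B ∧ Rejects X (a ∪ s) (above s B)
    · exact ⟨C \ K s, sdiff_subset, hC.sdiff hs.2.finite_accepts_insert,
        fun _ _ => disjoint_sdiff_left⟩
    · exact ⟨C, subset_rfl, hC, fun hsB hrej => absurd ⟨hsB, hrej⟩ hs⟩
  obtain ⟨C, hCB, hC, hCK⟩ := exists_fusion
    (P := fun s C => ↑s ⊆ B → Rejects X (a ∪ s) (above s B) → Disjoint C (K s))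
    (fun s C D hDC h hsB hs => (h hsB hs).mono_left hDC) dense hB
  have hrej_all (s : Finset ℕ) (hsC : ↑s ⊆ C) : Rejects X (a ∪ s) (above s B) := by
    induction s using Finset.induction_on_max with
    | empty => simpa using hrej
    | insert n s hsn ih =>
      rw [Finset.coe_insert, insert_subset_iff] at hsC
      have hnK : n ∉ K s := disjoint_left.1 (hCK s hsC.2 (hsC.2.trans hCB) (ih hsC.2))
        ⟨hsC.1, hsn⟩
      have hn : n ∈ above s B := ⟨hCB hsC.1, hsn⟩
      have hdec_n := hdec (insert n s)
        (by simpa [insert_subset_iff] using ⟨hn.1, hsC.2.trans hCB⟩)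
      rw [Finset.union_insert, above_insert] at hdec_n ⊢
      exact hdec_n.resolve_left fun hacc => hnK ⟨hn, hacc⟩
  exact ⟨C, hCB, hC, fun s hsC => (hrej_all s hsC).mono (above_mono s hCB)⟩

lemma Rejects.exists_subset_rejects_union {A : Set ℕ} (hA : A.Infinite)
    (hrej : Rejects X a A) :
    ∃ C ⊆ A, C.Infinite ∧ ∀ s : Finset ℕ, ↑s ⊆ C → Rejects X (a ∪ s) (above s C) := by
  obtain ⟨B, hBA, hB, hdec⟩ := exists_subset_decides (X := X) (a := a) hA
  obtain ⟨C, hCB, hC, hrejC⟩ := exists_subset_rejects_of_decides hB (hrej.mono hBA) hdec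
  exact ⟨C, hCB.trans hBA, hC, hrejC⟩

def RamseyNull (X : Set EllSpace) : Prop :=
  ∀ (a : Finset ℕ) (A : Set ℕ), A.Infinite → ∃ B ⊆ A, B.Infinite ∧ Accepts X a B

lemma ramseyNull_of_isNowhereDense (hX : IsNowhereDense X) : RamseyNull X := by
  intro a A hA
  by_contra hrej
  simp only [not_exists, not_and] at hrej
  obtain ⟨C, hCA, hC, hrejC⟩ := Rejects.exists_subset_rejects_union (infinite_above hA a)
    fun C hC => hrej C (hC.trans (above_subset a A))
  obtain ⟨c, D, hD, hcD, hsub, hacc⟩ :=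
    exists_ellBasic_subset_disjoint_of_isNowhereDense hX hC
    fun x hx y hy => (hCA hy).2 x hx
  obtain ⟨hac, hcD_sub⟩ := subset_of_ellBasic_subset hD hsub
  have hDa : D \ a ⊆ above (c \ a) C := fun y hy =>
    ⟨((hcD_sub (Or.inr hy.1)).resolve_left hy.2),
      fun x hx => hcD x (Finset.sdiff_subset hx) y hy.1⟩
  refine hrejC (c \ a) (fun x hx => ?_) (D \ a) hDa (hD.sdiff a.finite_toSet) ?_
  · have hx' := Finset.mem_sdiff.1 hx
    exact (hcD_sub (Or.inl hx'.1)).resolve_left hx'.2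
  · rw [Finset.union_sdiff_of_subset hac]
    exact Accepts.mono hacc sdiff_subset

lemma RamseyNull.mono {Y : Set EllSpace} (hY : RamseyNull Y) (hXY : X ⊆ Y) : RamseyNull X :=
  fun a A hA => (hY a A hA).imp fun _ ⟨hBA, hB, hacc⟩ => ⟨hBA, hB, hacc.mono_right hXY⟩

lemma RamseyNull.union {Y : Set EllSpace} (hX : RamseyNull X) (hY : RamseyNull Y) :
    RamseyNull (X ∪ Y) := by
  intro a A hA
  obtain ⟨B, hBA, hB, haccX⟩ := hX a A hA
  obtain ⟨C, hCB, hC, haccY⟩ := hY a B hB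
  exact ⟨C, hCB.trans hBA, hC, disjoint_union_right.2 ⟨haccX.mono hCB, haccY⟩⟩

lemma RamseyNull.accumulate {X : ℕ → Set EllSpace} (hX : ∀ m, RamseyNull (X m)) (k : ℕ) :
    RamseyNull (accumulate X k) := by
  induction k with
  | zero => simpa using hX 0
  | succ k ih => simpa using ih.union (hX (k + 1))

/-- Fuse so that `B/s` accepts `a ∪ s` against `X 0, …, X (max s)`; a point `T` of `[a, B]`
lies in `[a ∪ s, B/s]` for every long enough initial segment `s` of `T \ a`. -/
lemma RamseyNull.iUnion {X : ℕ → Set EllSpace} (hX : ∀ m, RamseyNull (X m)) :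
    RamseyNull (⋃ m, X m) := by
  intro a A hA
  obtain ⟨B, hBA, hB, hacc⟩ := exists_fusion
    (P := fun s C => Accepts (Set.accumulate X (s.sup id)) (a ∪ s) C)
    (fun s C D hDC h => h.mono hDC) (fun s C hC => RamseyNull.accumulate hX _ _ C hC) hA
  refine ⟨B, hBA, hB, disjoint_left.2 fun T hT hTX => ?_⟩
  obtain ⟨m, hm⟩ := mem_iUnion.1 hTX
  obtain ⟨N, hN, hN_gt⟩ := (T.2.sdiff a.finite_toSet).exists_gt (max m (a.sup id))
  have ha_lt : ∀ x ∈ a, x < N := fun x hx =>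
    (Finset.le_sup (f := id) hx).trans_lt ((le_max_right _ _).trans_lt hN_gt)
  set s := initialSegment T N \ a
  have hsB : ↑s ⊆ B := fun x hx =>
    have hx' := Finset.mem_sdiff.1 hx
    (hT.2 (mem_initialSegment.1 hx'.1).1).resolve_left hx'.2
  have hNs : N ∈ s := Finset.mem_sdiff.2 ⟨mem_initialSegment.2 ⟨hN.1, le_rfl⟩, hN.2⟩
  have has : a ∪ s = initialSegment T N := Finset.union_sdiff_of_subset fun x hx =>
    mem_initialSegment.2 ⟨hT.1 hx, (ha_lt x hx).le⟩
  have htail : T.1 ∩ Ioi N ⊆ above s B := fun y hy =>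
    ⟨(hT.2 hy.1).resolve_left fun hya => (ha_lt y hya).not_gt hy.2,
      fun x hx => (mem_initialSegment.1 (Finset.mem_sdiff.1 hx).1).2.trans_lt hy.2⟩
  refine disjoint_left.1 (hacc s hsB) ?_ (mem_accumulate.2 ⟨m, ?_, hm⟩)
  · rw [has]
    exact ellBasic_mono_right _ htail (mem_ellBasic_initialSegment T N)
  · exact ((le_max_left _ _).trans_lt hN_gt).le.trans (Finset.le_sup (f := id) hNs)

lemma RamseyNull.sUnion {𝒮 : Set (Set EllSpace)} (h𝒮 : 𝒮.Countable)
    (hnull : ∀ X ∈ 𝒮, RamseyNull X) : RamseyNull (⋃₀ 𝒮) := by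
  rcases 𝒮.eq_empty_or_nonempty with rfl | hne
  · exact fun a A hA => ⟨A, subset_rfl, hA, by simp [Accepts]⟩
  obtain ⟨X, rfl⟩ := h𝒮.exists_eq_range hne
  rw [sUnion_range]
  exact RamseyNull.iUnion fun m => hnull _ (mem_range_self m)

lemma RamseyNull.isNowhereDense (hX : RamseyNull X) : IsNowhereDense X := by
  refine eq_empty_iff_forall_notMem.2 fun T hT => ?_
  obtain ⟨a, A, hA, haA, -, hsub⟩ := exists_ellBasic_subset_of_mem_open hT isOpen_interior
  obtain ⟨B, hBA, hB, hacc⟩ := hX a A hA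
  have hopen : IsOpen (EllBasic a B) := isOpen_ellBasic hB fun x hx y hy => haA x hx y (hBA hy)
  have hS := mem_ellBasic_union a hB
  exact disjoint_left.1 (hacc.closure_right hopen) hS
    (interior_subset (hsub (ellBasic_mono_right a hBA hS)))

end Ellentuck

/-- In the Ellentuck topology, every meager set is nowhere dense. -/
theorem ellentuck_meagre_nowhereDense (S : Set EllSpace) (hS : IsMeagre S) :
    IsNowhereDense S := by
  obtain ⟨𝒮, hnwd, hcount, hS𝒮⟩ := isMeagre_iff_countable_union_isNowhereDense.1 hS
  have hnull : Ellentuck.RamseyNull (⋃₀ 𝒮) := Ellentuck.RamseyNull.sUnion hcount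
    fun X hX => Ellentuck.ramseyNull_of_isNowhereDense (hnwd X hX)
  exact (hnull.mono hS𝒮).isNowhereDense
end

section
/- Every nonempty basic Ellentuck open set [a, A] is not meager in the Ellentuck topology on [ω]^ω. -/
/-- The generating family. -/
def EllGen : Set (Set EllSpace) :=
  {U | ∃ (a : Finset ℕ) (A : Set ℕ), A.Infinite ∧
      (∀ x ∈ a, ∀ y ∈ A, x < y) ∧ U = EllBasic a A}

lemma ell_topology_eq : (inferInstance : TopologicalSpace EllSpace)
    = TopologicalSpace.generateFrom EllGen := rfl

/-- Intersection normalization: around any point of the intersection of two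
generator basics there is a generator basic inside the intersection. -/
lemma ell_inter {a₁ a₂ : Finset ℕ} {A₁ A₂ : Set ℕ}
    (h₁ : ∀ x ∈ a₁, ∀ y ∈ A₁, x < y) (h₂ : ∀ x ∈ a₂, ∀ y ∈ A₂, x < y)
    {S : EllSpace} (hS₁ : S ∈ EllBasic a₁ A₁) (hS₂ : S ∈ EllBasic a₂ A₂) :
    ∃ (d : Finset ℕ) (D : Set ℕ), D.Infinite ∧ (∀ x ∈ d, ∀ y ∈ D, x < y) ∧
      S ∈ EllBasic d D ∧ D ⊆ A₁ ∩ A₂ ∧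
      EllBasic d D ⊆ EllBasic a₁ A₁ ∩ EllBasic a₂ A₂ := by
  classical
  set m := (a₁ ∪ a₂).sup id with hm
  have hmem_m : ∀ x ∈ a₁ ∪ a₂, x ≤ m := fun x hx => Finset.le_sup (f := id) hx
  have hfin : (S.1 ∩ Set.Iic m).Finite := (Set.finite_Iic m).inter_of_right _
  set d := hfin.toFinset with hd
  have hdmem : ∀ x, x ∈ d ↔ x ∈ S.1 ∧ x ≤ m := by
    intro x; simp [hd, Set.Finite.mem_toFinset]
  set D := (A₁ ∩ A₂) ∩ Set.Ioi m with hD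
  have hSD : ∀ x ∈ S.1, m < x → x ∈ D := by
    intro x hx hmx
    have hx1 : x ∈ A₁ := by
      rcases hS₁.2 hx with h | h
      · exact absurd (hmem_m x (Finset.mem_union_left _ h)) (not_le.mpr hmx)
      · exact h
    have hx2 : x ∈ A₂ := by
      rcases hS₂.2 hx with h | h
      · exact absurd (hmem_m x (Finset.mem_union_right _ h)) (not_le.mpr hmx)
      · exact h
    exact ⟨⟨hx1, hx2⟩, hmx⟩
  refine ⟨d, D, ?_, ?_, ⟨?_, ?_⟩, Set.inter_subset_left, ?_⟩
  · -- D infinite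
    have : S.1 ∩ Set.Ioi m ⊆ D := fun x ⟨hx, hmx⟩ => hSD x hx hmx
    refine Set.Infinite.mono this ?_
    have := S.2.diff (Set.finite_Iic m)
    refine this.mono ?_
    intro x hx
    exact ⟨hx.1, Set.mem_Ioi.mpr (not_le.mp (fun h => hx.2 h))⟩
  · intro x hx y hy
    exact lt_of_le_of_lt ((hdmem x).mp hx).2 hy.2
  · intro x hx; exact ((hdmem x).mp hx).1
  · intro x hx
    by_cases hxm : x ≤ m
    · exact Or.inl ((hdmem x).mpr ⟨hx, hxm⟩)
    · exact Or.inr (hSD x hx (not_le.mp hxm))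
  · -- inclusion
    intro T hT
    have hdsub : (↑d : Set ℕ) ⊆ S.1 := fun x hx => ((hdmem x).mp hx).1
    have key : ∀ (a : Finset ℕ) (A : Set ℕ), S ∈ EllBasic a A →
        (∀ x ∈ a ∪ (a₁ ∪ a₂) , True) → (↑a : Set ℕ) ⊆ ↑d → D ⊆ A → T ∈ EllBasic a A := by
      intro a A hSa _ had hDA
      constructor
      · exact had.trans hT.1
      · intro x hx
        rcases hT.2 hx with h | h
        · exact hSa.2 (hdsub h)
        · exact Or.inr (hDA h)
    constructor
    · refine key a₁ A₁ hS₁ (fun _ _ => trivial) ?_ (fun x hx => hx.1.1)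
      intro x hx
      exact (hdmem x).mpr ⟨hS₁.1 hx, hmem_m x (Finset.mem_union_left _ hx)⟩
    · refine key a₂ A₂ hS₂ (fun _ _ => trivial) ?_ (fun x hx => hx.1.2)
      intro x hx
      exact (hdmem x).mpr ⟨hS₂.1 hx, hmem_m x (Finset.mem_union_right _ hx)⟩

lemma ell_basis : TopologicalSpace.IsTopologicalBasis EllGen := by
  refine ⟨?_, ?_, rfl⟩
  · rintro t₁ ⟨a₁, A₁, hA₁, h₁, rfl⟩ t₂ ⟨a₂, A₂, hA₂, h₂, rfl⟩ S ⟨hS₁, hS₂⟩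
    obtain ⟨d, D, hDinf, hord, hSd, _, hsub⟩ := ell_inter h₁ h₂ hS₁ hS₂
    exact ⟨EllBasic d D, ⟨d, D, hDinf, hord, rfl⟩, hSd, hsub⟩
  · apply Set.eq_univ_of_univ_subset
    intro S _
    refine Set.mem_sUnion.mpr ⟨EllBasic ∅ Set.univ, ⟨∅, Set.univ, Set.infinite_univ, by simp, rfl⟩, ?_⟩
    exact ⟨by simp, by simp⟩

lemma ell_step (U : Set EllSpace) (hU : IsOpen U) (hUd : Dense U)
    (b : Finset ℕ) (B : Set ℕ) (hB : B.Infinite) (hbB : ∀ x ∈ b, ∀ y ∈ B, x < y) :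
    ∃ (c : Finset ℕ) (C : Set ℕ), C.Infinite ∧ (∀ x ∈ c, ∀ y ∈ C, x < y) ∧
      b ⊆ c ∧ b.card < c.card ∧ ↑c ⊆ (↑b : Set ℕ) ∪ B ∧ C ⊆ B ∧ EllBasic c C ⊆ U := by
  classical
  have hopen : IsOpen (EllBasic b B) := ell_basis.isOpen ⟨b, B, hB, hbB, rfl⟩
  have hne : (EllBasic b B).Nonempty := by
    refine ⟨⟨(↑b : Set ℕ) ∪ B, hB.mono Set.subset_union_right⟩, Set.subset_union_left, le_refl _⟩
  obtain ⟨S, hSb, hSU⟩ := hUd.inter_open_nonempty _ hopen hne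
  obtain ⟨t, ⟨c₀, C₀, hC₀, h₀, rfl⟩, hSt, htU⟩ :=
    ell_basis.exists_subset_of_mem_open hSU hU
  obtain ⟨d, D, hDinf, hord, hSd, hDsub, hsub⟩ := ell_inter h₀ hbB hSt hSb
  have hsubU : EllBasic d D ⊆ U := fun T hT => htU (hsub hT).1
  have hsubB : EllBasic d D ⊆ EllBasic b B := fun T hT => (hsub hT).2
  have hDB : D ⊆ B := fun y hy => (hDsub hy).2
  -- b ⊆ d
  have hbd : b ⊆ d := by
    intro x hx
    by_contra hxd
    have hTinf : ((↑d : Set ℕ) ∪ (D \ {x})).Infinite :=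
      (hDinf.diff (Set.finite_singleton x)).mono Set.subset_union_right
    have hT : (⟨_, hTinf⟩ : EllSpace) ∈ EllBasic d D := by
      refine ⟨Set.subset_union_left, ?_⟩
      intro y hy
      rcases hy with h | h
      · exact Or.inl h
      · exact Or.inr h.1
    have hbT := (hsubB hT).1 (Finset.mem_coe.mpr hx)
    rcases hbT with h | h
    · exact hxd h
    · exact h.2 rfl
  have hdS : (↑d : Set ℕ) ⊆ S.1 := hSd.1
  have hSbB : S.1 ⊆ (↑b : Set ℕ) ∪ B := hSb.2
  obtain ⟨y, hyD⟩ := hDinf.nonempty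
  have hyd : y ∉ d := fun h => lt_irrefl y (hord y h y hyD)
  refine ⟨insert y d, D ∩ Set.Ioi y, ?_, ?_, ?_, ?_, ?_, fun z hz => hDB hz.1, ?_⟩
  · have : D \ Set.Iic y ⊆ D ∩ Set.Ioi y := by
      intro z hz; exact ⟨hz.1, Set.mem_Ioi.mpr (not_le.mp hz.2)⟩
    exact (hDinf.diff (Set.finite_Iic y)).mono this
  · intro x hx z hz
    rcases Finset.mem_insert.mp hx with rfl | hx
    · exact hz.2
    · exact hord x hx z hz.1
  · exact hbd.trans (Finset.subset_insert _ _)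
  · calc b.card ≤ d.card := Finset.card_le_card hbd
      _ < (insert y d).card := by rw [Finset.card_insert_of_notMem hyd]; omega
  · intro x hx
    rcases Finset.mem_coe.mp hx with h
    rcases Finset.mem_insert.mp h with rfl | h
    · exact Or.inr (hDB hyD)
    · exact hSbB (hdS (Finset.mem_coe.mpr h))
  · intro T hT
    refine hsubU ⟨?_, ?_⟩
    · exact (Finset.coe_subset.mpr (Finset.subset_insert _ _)).trans hT.1
    · intro x hx
      rcases hT.2 hx with h | h
      · rcases Finset.mem_insert.mp (Finset.mem_coe.mp h) with rfl | h2
        · exact Or.inr hyD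
        · exact Or.inl (Finset.mem_coe.mpr h2)
      · exact Or.inr h.1

/-- Every nonempty basic Ellentuck open set `[a, A]` is not meager in the
Ellentuck topology. -/
theorem ellentuck_basic_not_meagre (a : Finset ℕ) (A : Set ℕ)
    (hA : A.Infinite) (hord : ∀ x ∈ a, ∀ y ∈ A, x < y)
    (hne : (EllBasic a A).Nonempty) :
    ¬ IsMeagre (EllBasic a A) := by
  classical
  intro hM
  rw [isMeagre_iff_countable_union_isNowhereDense] at hM
  obtain ⟨𝒮, hnd, hcount, hcover⟩ := hM
  obtain ⟨f, hf⟩ := (hcount.insert ∅).exists_eq_range (Set.insert_nonempty _ _)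
  have hndf : ∀ n, IsNowhereDense (f n) := by
    intro n
    have : f n ∈ insert (∅ : Set EllSpace) 𝒮 := hf ▸ Set.mem_range_self n
    rcases this with h | h
    · rw [h]; exact isNowhereDense_empty
    · exact hnd _ h
  have hUopen : ∀ n, IsOpen (closure (f n))ᶜ := fun n => isClosed_closure.isOpen_compl
  have hUdense : ∀ n, Dense (closure (f n))ᶜ := by
    intro n
    have h2 : interior (closure (f n)) = ∅ := hndf n
    rwa [interior_eq_empty_iff_dense_compl] at h2
  -- the invariant-carrying type
  let T := {p : Finset ℕ × Set ℕ // p.2.Infinite ∧ ∀ x ∈ p.1, ∀ y ∈ p.2, x < y}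
  have step : ∀ n (p : T), ∃ q : T,
      p.1.1 ⊆ q.1.1 ∧ p.1.1.card < q.1.1.card ∧
      (↑q.1.1 : Set ℕ) ⊆ (↑p.1.1 : Set ℕ) ∪ p.1.2 ∧ q.1.2 ⊆ p.1.2 ∧
      EllBasic q.1.1 q.1.2 ⊆ (closure (f n))ᶜ := by
    intro n p
    obtain ⟨c, C, hC, hcC, h1, h2, h3, h4, h5⟩ :=
      ell_step (closure (f n))ᶜ (hUopen n) (hUdense n) p.1.1 p.1.2 p.2.1 p.2.2
    exact ⟨⟨(c, C), hC, hcC⟩, h1, h2, h3, h4, h5⟩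
  choose F hF using step
  let g : ℕ → T := fun n => Nat.rec ⟨(a, A), hA, hord⟩ (fun n p => F n p) n
  have hg : ∀ n, (g n).1.1 ⊆ (g (n+1)).1.1 ∧ (g n).1.1.card < (g (n+1)).1.1.card ∧
      (↑(g (n+1)).1.1 : Set ℕ) ⊆ (↑(g n).1.1 : Set ℕ) ∪ (g n).1.2 ∧
      (g (n+1)).1.2 ⊆ (g n).1.2 ∧
      EllBasic (g (n+1)).1.1 (g (n+1)).1.2 ⊆ (closure (f n))ᶜ := fun n => hF n (g n)
  -- monotonicity facts
  have hmono : ∀ m n, m ≤ n → (g m).1.1 ⊆ (g n).1.1 := by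
    intro m n hmn
    induction n with
    | zero => rw [Nat.le_zero.mp hmn]
    | succ k ih =>
      rcases Nat.lt_or_ge m (k+1) with h | h
      · exact (ih (Nat.lt_succ_iff.mp h)).trans (hg k).1
      · rw [Nat.le_antisymm hmn h]
  have hcontain : ∀ m n, m ≤ n →
      (↑(g n).1.1 : Set ℕ) ⊆ (↑(g m).1.1 : Set ℕ) ∪ (g m).1.2 ∧ (g n).1.2 ⊆ (g m).1.2 := by
    intro m n hmn
    induction n with
    | zero => rw [Nat.le_zero.mp hmn]; exact ⟨Set.subset_union_left, le_refl _⟩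
    | succ k ih =>
      rcases Nat.lt_or_ge m (k+1) with h | h
      · obtain ⟨ih1, ih2⟩ := ih (Nat.lt_succ_iff.mp h)
        constructor
        · intro x hx
          rcases (hg k).2.2.1 hx with hh | hh
          · exact ih1 hh
          · exact Or.inr (ih2 hh)
        · exact ((hg k).2.2.2.1).trans ih2
      · rw [Nat.le_antisymm hmn h]; exact ⟨Set.subset_union_left, le_refl _⟩
  have hcard : ∀ n, n ≤ (g n).1.1.card := by
    intro n
    induction n with
    | zero => omega
    | succ k ih => have := (hg k).2.1; omega
  -- the fusion point
  set Sinf : Set ℕ := ⋃ n, (↑(g n).1.1 : Set ℕ) with hSinf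
  have hinf : Sinf.Infinite := by
    intro hfin
    set N := hfin.toFinset.card + 1 with hN
    have hsub : (g N).1.1 ⊆ hfin.toFinset := by
      intro x hx
      exact hfin.mem_toFinset.mpr (Set.mem_iUnion.mpr ⟨N, hx⟩)
    have := Finset.card_le_card hsub
    have := hcard N
    omega
  have hSmem : ∀ n, (⟨Sinf, hinf⟩ : EllSpace) ∈ EllBasic (g n).1.1 (g n).1.2 := by
    intro n
    constructor
    · intro x hx; exact Set.mem_iUnion.mpr ⟨n, hx⟩
    · intro x hx
      obtain ⟨m, hm⟩ := Set.mem_iUnion.mp hx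
      rcases Nat.le_total m n with h | h
      · exact Or.inl (hmono m n h hm)
      · exact (hcontain n m h).1 hm
  have hSa : (⟨Sinf, hinf⟩ : EllSpace) ∈ EllBasic a A := hSmem 0
  obtain ⟨t, ht𝒮, hSt⟩ := hcover hSa
  have : t ∈ Set.range f := hf ▸ Set.mem_insert_of_mem _ ht𝒮
  obtain ⟨n, rfl⟩ := this
  exact (hg n).2.2.2.2 (hSmem (n+1)) (subset_closure hSt)
end

section
/- The Galvin–Prikry theorem: for every Borel set P ⊆ [ω]^ω (Borel with respect to the usual topology inherited from 2^ω), there exists an infinite H ⊆ ℕ such that either [H]^ω ⊆ P or [H]^ω ⊆ [ω]^ω \ P. -/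
/-- `[ω]^ω` as a subspace of Cantor space `2^ω` via characteristic functions. -/
def InfCantor : Type := {f : ℕ → Bool // {n | f n = true}.Infinite}

instance : TopologicalSpace InfCantor :=
  instTopologicalSpaceSubtype

instance : MeasurableSpace InfCantor := borel InfCantor

instance : BorelSpace InfCantor := ⟨rfl⟩

/-- `[H]^ω`: the members of `[ω]^ω` all of whose elements lie in `H`. -/
def cube (H : Set ℕ) : Set InfCantor := {f | ∀ n, f.1 n = true → n ∈ H}

/-!
Call `P ⊆ [ω]^ω` completely Ramsey if every Ellentuck cube `[s, A]` contains a cube `[s, B]`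
inside `P` or inside its complement. This class is closed under complements and contains every
set determined by finitely many digits, hence (once closed under countable unions) every open set
and so every Borel set. For `⋃ Pₖ`, fusion gives `B` such that each `[t, B/t]` decides
`P₀, …, P_{max t}`; then `X ∈ [s, B]` lies in the union iff some initial segment `u` of `X` has
`[u, B] ⊆ Pₖ` for some `k`, and Galvin's lemma makes this happen for all or for none of the `X` in a
smaller cube. Galvin's lemma itself is the accept/reject argument: fusion makes every stem decided,
and if `s` is rejected a second fusion keeps every one-point extension of a rejected stem rejected.
-/

namespace GalvinPrikry

open Set

/-- `B/t` in the usual notation. -/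
def above (t : Finset ℕ) (B : Set ℕ) : Set ℕ := {b ∈ B | ∀ a ∈ t, a < b}

/-- The Ellentuck cube `[s, B]`. -/
def ellentuckCube (s : Finset ℕ) (B : Set ℕ) : Set (Set ℕ) :=
  {X | X.Infinite ∧ ↑s ⊆ X ∧ X ⊆ ↑s ∪ above s B}

def IsInitSeg (u : Finset ℕ) (X : Set ℕ) : Prop :=
  ↑u ⊆ X ∧ ∀ b ∈ X, b ∉ u → ∀ a ∈ u, a < b

section Basic

variable {s t u : Finset ℕ} {B B' X : Set ℕ}

theorem above_subset (t : Finset ℕ) (B : Set ℕ) : above t B ⊆ B := fun _ hb => hb.1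

theorem above_mono (h : B ⊆ B') : above t B ⊆ above t B' := fun _ hb => ⟨h hb.1, hb.2⟩

theorem above_above (t : Finset ℕ) (B : Set ℕ) : above t (above t B) = above t B :=
  Subset.antisymm (above_subset t _) fun _ hb => ⟨hb, hb.2⟩

theorem infinite_inter_Ioi (hB : B.Infinite) (n : ℕ) : (B ∩ Ioi n).Infinite := by
  simpa [sdiff_eq, compl_Iic] using hB.sdiff (finite_Iic n)

theorem infinite_above (hB : B.Infinite) (t : Finset ℕ) : (above t B).Infinite :=
  (infinite_inter_Ioi hB (t.sup id)).mono fun _ hb =>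
    ⟨hb.1, fun _ ha => (Finset.le_sup (f := id) ha).trans_lt hb.2⟩

theorem ellentuckCube_mono (h : B ⊆ B') : ellentuckCube s B ⊆ ellentuckCube s B' :=
  fun _ ⟨hX, hsX, hXs⟩ => ⟨hX, hsX, hXs.trans (union_subset_union_right _ (above_mono h))⟩

theorem ellentuckCube_above (s : Finset ℕ) (B : Set ℕ) :
    ellentuckCube s (above s B) = ellentuckCube s B := by
  rw [ellentuckCube, above_above]; rfl

theorem IsInitSeg.trans (hu : IsInitSeg u ↑t) (ht : IsInitSeg t X) : IsInitSeg u X := by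
  refine ⟨hu.1.trans ht.1, fun b hb hbu a ha => ?_⟩
  by_cases hbt : b ∈ t
  · exact hu.2 b hbt hbu a ha
  · exact ht.2 b hb hbt a (hu.1 ha)

theorem IsInitSeg.union (hu : IsInitSeg u X) (hs : IsInitSeg s X) : IsInitSeg u ↑(s ∪ u) := by
  refine ⟨by simp, fun b hb hbu => hu.2 b ?_ hbu⟩
  rcases Finset.mem_union.mp hb with hbs | hbu'
  · exact hs.1 hbs
  · exact absurd hbu' hbu

theorem isInitSeg_of_mem_ellentuckCube (hX : X ∈ ellentuckCube s B) : IsInitSeg s X := by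
  refine ⟨hX.2.1, fun b hb hbs a ha => ?_⟩
  rcases hX.2.2 hb with hbs' | hbB
  · exact absurd hbs' hbs
  · exact hbB.2 a ha

theorem mem_ellentuckCube_of_isInitSeg (hX : X ∈ ellentuckCube s B) (hsu : s ⊆ u)
    (hu : IsInitSeg u X) : X ∈ ellentuckCube u B := by
  refine ⟨hX.1, hu.1, fun x hx => ?_⟩
  by_cases hxu : x ∈ u
  · exact Or.inl hxu
  rcases hX.2.2 hx with hxs | hxB
  · exact absurd (hsu hxs) hxu
  · exact Or.inr ⟨hxB.1, hu.2 x hx hxu⟩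

theorem exists_isInitSeg_le_sup (hX : X ∈ ellentuckCube s B) (k : ℕ) :
    ∃ u : Finset ℕ, IsInitSeg u X ∧ s ⊆ u ∧ k ≤ u.sup id := by
  obtain ⟨m, hmX, hm⟩ := hX.1.exists_gt (max k (s.sup id))
  have hfin : (X ∩ Iic m).Finite := (finite_Iic m).inter_of_right X
  refine ⟨hfin.toFinset, ⟨by simp, fun b hb hbu a ha => ?_⟩, fun a ha => ?_, ?_⟩
  · simp only [Finite.mem_toFinset, mem_inter_iff, mem_Iic, not_and, not_le] at hbu ha
    exact ha.2.trans_lt (hbu hb)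
  · have : a ≤ s.sup id := Finset.le_sup (f := id) ha
    simpa using ⟨hX.2.1 ha, by omega⟩
  · exact (le_max_left _ _).trans <| hm.le.trans <| Finset.le_sup (f := id) (by simpa using hmX)

end Basic

section Fusion

variable {ι : Type*} {A : Set ℕ}

theorem exists_forall_mem_finset {Φ : ι → Set ℕ → Prop}
    (hered : ∀ i C C', Φ i C → C' ⊆ C → C'.Infinite → Φ i C')
    (dense : ∀ i B, B ⊆ A → B.Infinite → ∃ C ⊆ B, C.Infinite ∧ Φ i C) (S : Finset ι) {B : Set ℕ}
    (hBA : B ⊆ A) (hB : B.Infinite) : ∃ C ⊆ B, C.Infinite ∧ ∀ i ∈ S, Φ i C := by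
  classical
  induction S using Finset.induction_on with
  | empty => exact ⟨B, subset_rfl, hB, by simp⟩
  | insert i S _ ih =>
    obtain ⟨C, hCB, hC, hCS⟩ := ih
    obtain ⟨D, hDC, hD, hDi⟩ := dense i C (hCB.trans hBA) hC
    refine ⟨D, hDC.trans hCB, hD, Finset.forall_mem_insert _ _ _ |>.mpr ⟨hDi, ?_⟩⟩
    exact fun j hj => hered j C D (hCS j hj) hDC hD

variable {Φ : Finset ℕ → Set ℕ → Prop}
  (hered : ∀ t C C', Φ t C → C' ⊆ C → C'.Infinite → Φ t C')
  (dense : ∀ t B, B ⊆ A → B.Infinite → ∃ C ⊆ B, C.Infinite ∧ Φ t C)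
include hered dense

theorem exists_subset_Ioi_forall_subset_Iic (n : ℕ) {B : Set ℕ} (hBA : B ⊆ A) (hB : B.Infinite) :
    ∃ C ⊆ B ∩ Ioi n, C.Infinite ∧ ∀ t : Finset ℕ, ↑t ⊆ Iic n → Φ t C := by
  obtain ⟨C, hCB, hC, hCΦ⟩ :=
    exists_forall_mem_finset hered dense (Finset.range (n + 1)).powerset hBA hB
  refine ⟨C ∩ Ioi n, inter_subset_inter_left _ hCB, infinite_inter_Ioi hC n,
    fun t ht => hered t C _ (hCΦ t ?_) inter_subset_left (infinite_inter_Ioi hC n)⟩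
  exact Finset.mem_powerset.mpr fun a ha => Finset.mem_range_succ_iff.mpr (ht ha)

/-- `B = {n₁ < n₂ < ⋯}` with `n₀ = N` and `nₖ₊₁ = min Cₖ`, where `C₀ ⊇ C₁ ⊇ ⋯` are infinite,
`Cₖ ⊆ (nₖ, ∞)`, and `Φ t Cₖ` holds for every `t ⊆ [0, nₖ]`. -/
theorem exists_diagonal (hA : A.Infinite) (N : ℕ) :
    ∃ B ⊆ A ∩ Ioi N, B.Infinite ∧
      ∀ n ∈ insert N B, ∀ t : Finset ℕ, ↑t ⊆ Iic n → Φ t (B ∩ Ioi n) := by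
  have step (n : ℕ) (C : {C : Set ℕ // C ⊆ A ∧ C.Infinite}) :
      ∃ D : {C : Set ℕ // C ⊆ A ∧ C.Infinite},
        D.1 ⊆ C.1 ∩ Ioi n ∧ ∀ t : Finset ℕ, ↑t ⊆ Iic n → Φ t D.1 := by
    obtain ⟨D, hDC, hD, hDΦ⟩ := exists_subset_Ioi_forall_subset_Iic hered dense n C.2.1 C.2.2
    exact ⟨⟨D, (hDC.trans inter_subset_left).trans C.2.1, hD⟩, hDC, hDΦ⟩
  choose next hnext_sub hnext_Φ using step
  let C : ℕ → {C : Set ℕ // C ⊆ A ∧ C.Infinite} :=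
    fun k => Nat.rec (next N ⟨A, subset_rfl, hA⟩) (fun _ D => next (sInf D.1) D) k
  let n : ℕ → ℕ := fun k => Nat.rec N (fun j _ => sInf (C j).1) k
  have hC (k : ℕ) : (C k).1 ⊆ Ioi (n k) ∧ ∀ t : Finset ℕ, ↑t ⊆ Iic (n k) → Φ t (C k).1 := by
    cases k <;> exact ⟨(hnext_sub _ _).trans inter_subset_right, hnext_Φ _ _⟩
  have hC_anti : Antitone fun k => (C k).1 :=
    antitone_nat_of_succ_le fun k => (hnext_sub _ _).trans inter_subset_left
  have hn_mem (k : ℕ) : n (k + 1) ∈ (C k).1 := Nat.sInf_mem (C k).2.2.nonempty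
  have hn_mono : StrictMono n := strictMono_nat_of_lt_succ fun k => (hC k).1 (hn_mem k)
  have hB : (range fun k => n (k + 1)).Infinite :=
    infinite_range_of_injective (hn_mono.injective.comp Nat.succ_injective)
  refine ⟨range fun k => n (k + 1), ?_, hB, ?_⟩
  · rintro _ ⟨k, rfl⟩
    exact ⟨(C k).2.1 (hn_mem k), hn_mono k.succ_pos⟩
  have htail (k : ℕ) (t : Finset ℕ) (ht : ↑t ⊆ Iic (n k)) :
      Φ t ((range fun j => n (j + 1)) ∩ Ioi (n k)) := by
    refine hered t _ _ ((hC k).2 t ht) ?_ (infinite_inter_Ioi hB _)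
    rintro _ ⟨⟨j, rfl⟩, hj⟩
    exact hC_anti (Nat.lt_succ_iff.mp (hn_mono.lt_iff_lt.mp hj)) (hn_mem j)
  rintro _ (rfl | ⟨j, rfl⟩)
  exacts [htail 0, htail (j + 1)]

theorem exists_fusion (hA : A.Infinite) (s : Finset ℕ) :
    ∃ B ⊆ above s A, B.Infinite ∧ ∀ t : Finset ℕ, ↑t ⊆ ↑s ∪ B → Φ t (above t B) := by
  obtain ⟨B, hBA, hB, hBΦ⟩ := exists_diagonal hered dense hA (s.sup id)
  refine ⟨B, fun b hb => ⟨(hBA hb).1, fun a ha => (Finset.le_sup (f := id) ha).trans_lt (hBA hb).2⟩,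
    hB, fun t ht => ?_⟩
  -- If `max t` exceeds `max s`, it is not in `s`, hence it is some element of `B`.
  set m := max (s.sup id) (t.sup id)
  have hm : m ∈ insert (s.sup id) B := by
    rcases le_or_gt (t.sup id) (s.sup id) with hle | hlt
    · exact Or.inl (max_eq_left hle)
    have hne : t.Nonempty := Finset.nonempty_iff_ne_empty.mpr fun h => by simp [h] at hlt
    obtain ⟨a, ha, hat⟩ := t.exists_mem_eq_sup hne id
    rw [show m = a from (max_eq_right hlt.le).trans hat]
    refine Or.inr ((ht ha).resolve_left fun has => ?_)
    exact (Finset.le_sup (f := id) has).not_gt (hat ▸ hlt)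
  refine hered t _ _ (hBΦ m hm t fun a ha => ?_) (fun x hx => ⟨hx.1, ?_⟩) (infinite_above hB t)
  · exact (Finset.le_sup (f := id) ha).trans (le_max_right _ _)
  · exact max_lt (hBA hx.1).2 ((Finset.sup_lt_iff (bot_le.trans_lt (hBA hx.1).2)).mpr hx.2)

end Fusion

section Galvin

variable (T : Set (Finset ℕ))

def Accepts (t : Finset ℕ) (X : Set ℕ) : Prop :=
  ∀ Y ∈ ellentuckCube t X, ∃ u ∈ T, IsInitSeg u Y

def Rejects (t : Finset ℕ) (X : Set ℕ) : Prop :=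
  ∀ Y ⊆ X, Y.Infinite → ¬ Accepts T t Y

variable {T} {s t u : Finset ℕ} {B X Y : Set ℕ}

theorem Accepts.mono (h : Accepts T t X) (hYX : Y ⊆ X) : Accepts T t Y :=
  fun Z hZ => h Z (ellentuckCube_mono hYX hZ)

theorem Rejects.mono (h : Rejects T t X) (hYX : Y ⊆ X) : Rejects T t Y :=
  fun Z hZY hZ => h Z (hZY.trans hYX) hZ

theorem accepts_above_iff : Accepts T t (above t X) ↔ Accepts T t X := by
  rw [Accepts, Accepts, ellentuckCube_above]

theorem exists_accepts_or_rejects (t : Finset ℕ) (hB : B.Infinite) :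
    ∃ C ⊆ B, C.Infinite ∧ (Accepts T t C ∨ Rejects T t C) := by
  by_cases hrej : Rejects T t B
  · exact ⟨B, subset_rfl, hB, Or.inr hrej⟩
  simp only [Rejects, not_forall, not_not] at hrej
  obtain ⟨C, hCB, hC, hacc⟩ := hrej
  exact ⟨C, hCB, hC, Or.inl hacc⟩

theorem accepts_of_isInitSeg (huT : u ∈ T) (hu : IsInitSeg u ↑t) : Accepts T t X :=
  fun _ hY => ⟨u, huT, hu.trans (isInitSeg_of_mem_ellentuckCube hY)⟩

/-- For `Y ∈ [t, X]` use the extension of `t` by the least element of `Y ∖ t`. -/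
theorem accepts_of_forall_insert (hXB : X ⊆ above t B)
    (h : ∀ n ∈ X, Accepts T (insert n t) B) : Accepts T t X := by
  intro Y hY
  have hne : (Y \ ↑t).Nonempty := (hY.1.sdiff t.finite_toSet).nonempty
  set n := sInf (Y \ ↑t)
  have hn : n ∈ Y \ ↑t := Nat.sInf_mem hne
  have hnX : n ∈ X := ((hY.2.2 hn.1).resolve_left hn.2).1
  have hinit : IsInitSeg (insert n t) Y := by
    refine ⟨by simpa [Set.insert_subset_iff] using And.intro hn.1 hY.2.1, fun b hb hbn a ha => ?_⟩
    rw [Finset.mem_insert, not_or] at hbn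
    rcases Finset.mem_insert.mp ha with rfl | hat
    · exact (Nat.sInf_le (show b ∈ Y \ ↑t from ⟨hb, hbn.2⟩)).lt_of_ne' hbn.1
    · exact ((hY.2.2 hb).resolve_left hbn.2).2 a hat
  exact h n hnX Y <| mem_ellentuckCube_of_isInitSeg
    (ellentuckCube_mono (hXB.trans (above_subset t B)) hY) (Finset.subset_insert n t) hinit

/-- Otherwise the accepted extensions form an infinite subset of `B/t` accepting `t`. -/
theorem Rejects.exists_infinite_rejects_insert {D : Set ℕ} (hrej : Rejects T t (above t B))
    (hDB : D ⊆ above t B) (hD : D.Infinite)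
    (hdec : ∀ n ∈ D, Accepts T (insert n t) B ∨ Rejects T (insert n t) (above (insert n t) B)) :
    ∃ E ⊆ D, E.Infinite ∧ ∀ n ∈ E, Rejects T (insert n t) (above (insert n t) B) := by
  set E := {n ∈ D | Rejects T (insert n t) (above (insert n t) B)}
  refine ⟨E, sep_subset _ _, fun hfin => ?_, fun n hn => hn.2⟩
  have hF : D \ E ⊆ above t B := sdiff_subset.trans hDB
  refine hrej _ hF (hD.sdiff hfin) (accepts_of_forall_insert hF fun n hn => ?_)
  exact (hdec n hn.1).resolve_right fun hr => hn.2 ⟨hn.1, hr⟩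

theorem rejects_union {C : Set ℕ} (hCB : C ⊆ above s B) (hs : Rejects T s (above s B))
    (hstep : ∀ t : Finset ℕ, ↑t ⊆ ↑s ∪ C → Rejects T t (above t B) →
      ∀ n ∈ above t C, Rejects T (insert n t) (above (insert n t) B))
    (v : Finset ℕ) (hv : ↑v ⊆ C) : Rejects T (s ∪ v) (above (s ∪ v) B) := by
  classical
  induction v using Finset.induction_on_max with
  | empty => simpa using hs
  | insert a v hav ih =>
    have haC : a ∈ C := hv (by simp)
    have hvC : ↑v ⊆ C := fun x hx => hv (by simp [Finset.mem_coe.mp hx])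
    rw [Finset.union_insert]
    refine hstep (s ∪ v) ?_ (ih hvC) a ⟨haC, fun x hx => ?_⟩
    · rw [Finset.coe_union]
      exact union_subset_union_right _ hvC
    · rcases Finset.mem_union.mp hx with hxs | hxv
      · exact (hCB haC).2 x hxs
      · exact hav x hxv

theorem exists_forall_rejects_union (hB : B.Infinite)
    (hdec : ∀ t : Finset ℕ, ↑t ⊆ ↑s ∪ B → Accepts T t B ∨ Rejects T t (above t B))
    (hrej : Rejects T s (above s B)) :
    ∃ C ⊆ above s B, C.Infinite ∧ ∀ v : Finset ℕ, ↑v ⊆ C → Rejects T (s ∪ v) (above (s ∪ v) B) := by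
  have hdense (t : Finset ℕ) (D : Set ℕ) (hDB : D ⊆ B) (hD : D.Infinite) :
      ∃ E ⊆ D, E.Infinite ∧ (↑t ⊆ ↑s ∪ B → Rejects T t (above t B) →
        ∀ n ∈ E, Rejects T (insert n t) (above (insert n t) B)) := by
    by_cases ht : ↑t ⊆ ↑s ∪ B ∧ Rejects T t (above t B)
    · have hdec' (n : ℕ) (hn : n ∈ above t D) := hdec (insert n t) <| by
        rw [Finset.coe_insert]
        exact insert_subset (Or.inr (hDB hn.1)) ht.1
      obtain ⟨E, hE, hEinf, hErej⟩ :=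
        ht.2.exists_infinite_rejects_insert (above_mono hDB) (infinite_above hD t) hdec'
      exact ⟨E, hE.trans (above_subset t D), hEinf, fun _ _ => hErej⟩
    · exact ⟨D, subset_rfl, hD, fun h₁ h₂ => absurd ⟨h₁, h₂⟩ ht⟩
  obtain ⟨C, hCB, hC, hstep⟩ := exists_fusion
    (fun t E E' h hE'E _ ht hrej n hn => h ht hrej n (hE'E hn)) hdense hB s
  refine ⟨C, hCB, hC, rejects_union hCB hrej fun t ht => hstep t ht ?_⟩
  exact ht.trans (union_subset_union_right _ ((hCB.trans (above_subset s B))))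

/-- Galvin's lemma (Nash-Williams' theorem in Ellentuck cubes). -/
theorem galvin (T : Set (Finset ℕ)) (s : Finset ℕ) {A : Set ℕ} (hA : A.Infinite) :
    ∃ B ⊆ A, B.Infinite ∧ ((∀ X ∈ ellentuckCube s B, ∃ u ∈ T, IsInitSeg u X) ∨
      ∀ X ∈ ellentuckCube s B, ∀ u ∈ T, ¬ IsInitSeg u X) := by
  obtain ⟨B, hBA, hB, hdec⟩ := exists_fusion (Φ := fun t C => Accepts T t C ∨ Rejects T t C)
    (fun t C C' h hC'C _ => h.imp (·.mono hC'C) (·.mono hC'C))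
    (fun t _ _ hB => exists_accepts_or_rejects t hB) hA s
  have hBA' : B ⊆ A := hBA.trans (above_subset s A)
  by_cases hacc : Accepts T s B
  · exact ⟨B, hBA', hB, Or.inl hacc⟩
  obtain ⟨C, hCB, hC, hrej⟩ := exists_forall_rejects_union hB
    (fun t ht => (hdec t ht).imp_left accepts_above_iff.mp)
    ((hdec s subset_union_left).resolve_left (mt accepts_above_iff.mp hacc))
  refine ⟨C, hCB.trans ((above_subset s B).trans hBA'), hC, Or.inr fun X hX u huT hu => ?_⟩
  have hus : ↑(u \ s) ⊆ C := fun x hx => by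
    rw [Finset.coe_sdiff] at hx
    exact ((hX.2.2 (hu.1 hx.1)).resolve_left hx.2).1
  have hrej_u := hrej (u \ s) hus
  rw [Finset.union_sdiff_self_eq_union] at hrej_u
  exact hrej_u _ subset_rfl (infinite_above hB _)
    (accepts_of_isInitSeg huT (hu.union (isInitSeg_of_mem_ellentuckCube hX)))

end Galvin

def _root_.InfCantor.toSet (f : InfCantor) : Set ℕ := {n | f.1 n = true}

theorem toSet_mem_ellentuckCube_empty_iff {f : InfCantor} {H : Set ℕ} :
    f.toSet ∈ ellentuckCube ∅ H ↔ f ∈ cube H := by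
  simp [ellentuckCube, above, cube, InfCantor.toSet, subset_def, f.2]

section CompletelyRamsey

def Decides (P : Set InfCantor) (s : Finset ℕ) (B : Set ℕ) : Prop :=
  (∀ f : InfCantor, f.toSet ∈ ellentuckCube s B → f ∈ P) ∨
    ∀ f : InfCantor, f.toSet ∈ ellentuckCube s B → f ∉ P

def IsCompletelyRamsey (P : Set InfCantor) : Prop :=
  ∀ (s : Finset ℕ) (A : Set ℕ), A.Infinite → ∃ B ⊆ A, B.Infinite ∧ Decides P s B

variable {P U : Set InfCantor} {s : Finset ℕ} {B B' : Set ℕ}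

theorem Decides.mono (h : Decides P s B) (hB'B : B' ⊆ B) : Decides P s B' :=
  h.imp (fun hP f hf => hP f (ellentuckCube_mono hB'B hf))
    (fun hP f hf => hP f (ellentuckCube_mono hB'B hf))

theorem decides_above_iff : Decides P s (above s B) ↔ Decides P s B := by
  rw [Decides, Decides, ellentuckCube_above]

theorem Decides.forall_of_mem {f : InfCantor} (h : Decides P s B) (hfP : f ∈ P)
    (hf : f.toSet ∈ ellentuckCube s B) : ∀ g : InfCantor, g.toSet ∈ ellentuckCube s B → g ∈ P :=
  h.resolve_right fun h' => h' f hf hfP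

theorem IsCompletelyRamsey.compl (h : IsCompletelyRamsey P) : IsCompletelyRamsey Pᶜ :=
  fun s A hA => (h s A hA).imp fun _ ⟨hBA, hB, hdec⟩ =>
    ⟨hBA, hB, hdec.symm.imp id fun hP f hf hfP => hfP (hP f hf)⟩

theorem mem_iff_of_mem_ellentuckCube {X : Set ℕ} {i : ℕ} (hX : X ∈ ellentuckCube s B)
    (hiB : ∀ b ∈ B, i < b) : i ∈ X ↔ i ∈ s :=
  ⟨fun hi => (hX.2.2 hi).resolve_right fun h => (hiB i h.1).false, fun h => hX.2.1 h⟩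

theorem isCompletelyRamsey_of_cylinder (n : ℕ)
    (hP : ∀ f g : InfCantor, g.1 ∈ PiNat.cylinder f.1 n → f ∈ P → g ∈ P) :
    IsCompletelyRamsey P := by
  intro s A hA
  set B := above (insert n s) A
  have hagree (f g : InfCantor) (hf : f.toSet ∈ ellentuckCube s B)
      (hg : g.toSet ∈ ellentuckCube s B) : g.1 ∈ PiNat.cylinder f.1 n := by
    refine PiNat.mem_cylinder_iff.mpr fun i hi => Bool.eq_iff_iff.mpr ?_
    have hiB (b : ℕ) (hb : b ∈ B) : i < b := hi.trans (hb.2 n (Finset.mem_insert_self n s))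
    exact (mem_iff_of_mem_ellentuckCube hg hiB).trans (mem_iff_of_mem_ellentuckCube hf hiB).symm
  refine ⟨B, above_subset _ A, infinite_above hA _, ?_⟩
  by_cases h : ∃ f : InfCantor, f.toSet ∈ ellentuckCube s B ∧ f ∈ P
  · obtain ⟨f, hf, hfP⟩ := h
    exact Or.inl fun g hg => hP f g (hagree f g hf hg) hfP
  · simp only [not_exists, not_and] at h
    exact Or.inr h

theorem iUnion_cylinder_of_isOpen (hU : IsOpen U) :
    ⋃ n, {f : InfCantor | ∀ g : InfCantor, g.1 ∈ PiNat.cylinder f.1 n → g ∈ U} = U := by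
  refine Subset.antisymm (iUnion_subset fun n f hf => hf f (PiNat.self_mem_cylinder f.1 n))
    fun f hf => ?_
  obtain ⟨V, hV, rfl⟩ := isOpen_induced_iff.mp hU
  obtain ⟨_, ⟨x, n, rfl⟩, hfx, hxV⟩ :=
    (PiNat.isTopologicalBasis_cylinders fun _ => Bool).isOpen_iff.mp hV f.1 hf
  refine mem_iUnion.mpr ⟨n, fun g hg => hxV ?_⟩
  rwa [← PiNat.mem_cylinder_iff_eq.mp hfx]

theorem IsCompletelyRamsey.iUnion {P : ℕ → Set InfCantor} (hP : ∀ k, IsCompletelyRamsey (P k)) :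
    IsCompletelyRamsey (⋃ k, P k) := by
  intro s A hA
  obtain ⟨B, hBA, hB, hdec⟩ := exists_fusion
    (Φ := fun t C => ∀ k ∈ Finset.range (t.sup id + 1), Decides (P k) t C)
    (fun t C C' h hC'C _ k hk => (h k hk).mono hC'C)
    (fun t _ hBA hB => exists_forall_mem_finset (fun _ _ _ h hC'C _ => h.mono hC'C)
      (fun k B _ hB => hP k t B hB) _ hBA hB) hA s
  set T : Set (Finset ℕ) :=
    {u | s ⊆ u ∧ ∃ k, ∀ f : InfCantor, f.toSet ∈ ellentuckCube u B → f ∈ P k}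
  obtain ⟨C, hCB, hC, hCT⟩ := galvin T s hB
  refine ⟨C, hCB.trans (hBA.trans (above_subset s A)), hC,
    hCT.imp (fun h f hf => ?_) fun h f hf hfP => ?_⟩
  · obtain ⟨u, ⟨hsu, k, hk⟩, hu⟩ := h f.toSet hf
    exact mem_iUnion.mpr
      ⟨k, hk f (mem_ellentuckCube_of_isInitSeg (ellentuckCube_mono hCB hf) hsu hu)⟩
  · obtain ⟨k, hfk⟩ := mem_iUnion.mp hfP
    obtain ⟨u, hu, hsu, hku⟩ := exists_isInitSeg_le_sup hf k
    have hfu := mem_ellentuckCube_of_isInitSeg (ellentuckCube_mono hCB hf) hsu hu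
    have huB : ↑u ⊆ ↑s ∪ B :=
      hu.1.trans (hf.2.2.trans (union_subset_union_right _ ((above_subset s C).trans hCB)))
    have hdec_u := decides_above_iff.mp (hdec u huB k (Finset.mem_range_succ_iff.mpr hku))
    exact h f.toSet hf u ⟨hsu, k, hdec_u.forall_of_mem hfk hfu⟩ hu

theorem isCompletelyRamsey_of_isOpen (hU : IsOpen U) : IsCompletelyRamsey U := by
  rw [← iUnion_cylinder_of_isOpen hU]
  refine IsCompletelyRamsey.iUnion fun n => isCompletelyRamsey_of_cylinder n
    fun f g hfg hf g' hg' => ?_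
  exact hf g' (PiNat.mem_cylinder_iff_eq.mp hfg ▸ hg')

theorem isCompletelyRamsey_of_measurableSet (hP : MeasurableSet P) : IsCompletelyRamsey P :=
  hP.induction_on_open (C := fun P _ => IsCompletelyRamsey P)
    (fun _ hU => isCompletelyRamsey_of_isOpen hU) (fun _ _ h => h.compl)
    (fun _ _ _ h => IsCompletelyRamsey.iUnion h)

end CompletelyRamsey

end GalvinPrikry

/-- Galvin–Prikry theorem: every Borel subset of `[ω]^ω` admits a homogeneous
infinite set `H`. -/
theorem galvin_prikry (P : Set InfCantor) (hP : MeasurableSet P) :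
    ∃ H : Set ℕ, H.Infinite ∧ (cube H ⊆ P ∨ cube H ⊆ Pᶜ) := by
  obtain ⟨H, -, hH, hdec⟩ :=
    GalvinPrikry.isCompletelyRamsey_of_measurableSet hP ∅ Set.univ Set.infinite_univ
  refine ⟨H, hH, hdec.imp ?_ ?_⟩ <;>
    exact fun h f hf => h f (GalvinPrikry.toSet_mem_ellentuckCube_empty_iff.mpr hf)
end
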